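/- Let d ≥ 1, m₀ > 0, α > 0, and let ψ be the Lévy characteristic with drift b, diffusion σ², Poisson intensity λ and jump measure r. Then for every real-valued Schwartz function f on ℝ^d, the function x ↦ ψ((G*f)(x)) is Lebesgue integrable on ℝ^d, so that the characteristic functional C_φ(f) = exp(∫_{ℝ^d} ψ((G*f)(x)) dx) of the solution field is well defined, and moreover |C_φ(f)| ≤ 1. -/

import Mathlib

/-!
Since `m₀ ≠ 0`, the multiplier `(‖k‖² + m₀²)^(-α)` is a rescaled Bessel potential and has
temperate growth for every real `α`, so `G*f` is again a Schwartz function. Writing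
`ψ(t) = i b t - σ²/2 t² + λ (φ_r(t) - 1)` with `φ_r` the characteristic function of `r`,
the first moment of `r` gives `|φ_r(t) - 1| ≤ (∫ |s| dr) · |t|`, hence `|ψ(t)| ≤ A|t| + B t²`;
composed with the bounded integrable function `G*f` this is integrable. Finally
`Re ψ ≤ 0` because `Re φ_r ≤ 1`, so the exponential of the integral has modulus at most one.
-/

open MeasureTheory Filter Topology

/-- The Lévy characteristic with drift `b`, diffusion `σ2`, Poisson intensity `lam`
and jump measure `r`. -/
noncomputable def levyChar (b σ2 lam : ℝ) (r : Measure ℝ) (t : ℝ) : ℂ :=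
  Complex.I * (b : ℂ) * (t : ℂ) - ((σ2 / 2 : ℝ) : ℂ) * (t : ℂ) ^ 2
    + (lam : ℂ) * ∫ s : ℝ, (Complex.exp (Complex.I * (s : ℂ) * (t : ℂ)) - 1) ∂r

/-- The convoluted test function `G*f`, defined as the inverse Fourier transform of the
product of the multiplier `k ↦ (‖k‖² + m₀²)^(−α)` with the Fourier transform of `f`. -/
noncomputable def Gconv (d : ℕ) (m0 α : ℝ)
    (f : SchwartzMap (EuclideanSpace ℝ (Fin d)) ℂ) :
    EuclideanSpace ℝ (Fin d) → ℂ :=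
  FourierTransformInv.fourierInv
    (fun k => (((‖k‖ ^ 2 + m0 ^ 2) ^ (-α) : ℝ) : ℂ) *
      FourierTransform.fourier (fun x => f x) k)

open scoped SchwartzMap FourierTransform InnerProductSpace

theorem hasTemperateGrowth_norm_sq_add_sq_rpow {H : Type*} [NormedAddCommGroup H]
    [InnerProductSpace ℝ H] {m : ℝ} (hm : m ≠ 0) (p : ℝ) :
    (fun x : H => (‖x‖ ^ 2 + m ^ 2) ^ p).HasTemperateGrowth := by
  have hscale : (fun x : H => (‖x‖ ^ 2 + m ^ 2) ^ p)
      = fun x => (m ^ 2) ^ p * (1 + ‖m⁻¹ • x‖ ^ 2) ^ p := by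
    funext x
    rw [← Real.mul_rpow (by positivity) (by positivity), norm_smul, mul_pow, norm_inv,
      Real.norm_eq_abs, inv_pow, sq_abs, mul_add, mul_one, mul_inv_cancel_left₀ (by positivity),
      add_comm]
  rw [hscale]
  exact (Function.HasTemperateGrowth.const _).mul
    ((Function.hasTemperateGrowth_one_add_norm_sq_rpow H p).comp
      (m⁻¹ • ContinuousLinearMap.id ℝ H).hasTemperateGrowth)

theorem Gconv_eq_fourierMultiplierCLM (d : ℕ) {m0 : ℝ} (hm : m0 ≠ 0) (α : ℝ)
    (f : 𝓢(EuclideanSpace ℝ (Fin d), ℂ)) :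
    Gconv d m0 α f = SchwartzMap.fourierMultiplierCLM ℂ
      (fun k : EuclideanSpace ℝ (Fin d) => (‖k‖ ^ 2 + m0 ^ 2) ^ (-α)) f := by
  rw [SchwartzMap.fourierMultiplierCLM_apply, SchwartzMap.fourierInv_coe,
    SchwartzMap.smulLeftCLM_apply (hasTemperateGrowth_norm_sq_add_sq_rpow hm _)]
  simp only [Gconv, SchwartzMap.fourier_coe, Complex.real_smul]

theorem charFun_sub_one_eq_integral {E : Type*} [NormedAddCommGroup E] [InnerProductSpace ℝ E]
    [MeasurableSpace E] [OpensMeasurableSpace E] {μ : Measure E} [IsProbabilityMeasure μ]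
    (t : E) : charFun μ t - 1 = ∫ x, (Complex.exp (⟪x, t⟫_ℝ * Complex.I) - 1) ∂μ := by
  have hexp : Integrable (fun x => Complex.exp (⟪x, t⟫_ℝ * Complex.I)) μ := by
    refine (integrable_const (1 : ℝ)).mono' (by fun_prop) (ae_of_all _ fun x => ?_)
    rw [Complex.norm_exp_ofReal_mul_I]
  rw [integral_sub hexp (integrable_const 1), charFun_apply, integral_const, probReal_univ,
    one_smul]

theorem norm_charFun_sub_one_le {E : Type*} [NormedAddCommGroup E] [InnerProductSpace ℝ E]
    [MeasurableSpace E] [OpensMeasurableSpace E] {μ : Measure E} [IsProbabilityMeasure μ]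
    (hμ : Integrable (fun x => ‖x‖) μ) (t : E) :
    ‖charFun μ t - 1‖ ≤ (∫ x, ‖x‖ ∂μ) * ‖t‖ := by
  rw [charFun_sub_one_eq_integral, ← integral_mul_const]
  refine norm_integral_le_of_norm_le (hμ.mul_const _) (ae_of_all _ fun x => ?_)
  calc ‖Complex.exp (⟪x, t⟫_ℝ * Complex.I) - 1‖ ≤ ‖⟪x, t⟫_ℝ‖ := by
        rw [mul_comm]; exact Real.norm_exp_I_mul_ofReal_sub_one_le
    _ ≤ ‖x‖ * ‖t‖ := norm_inner_le_norm x t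

theorem levyChar_eq_charFun (b σ2 lam : ℝ) (r : Measure ℝ) [IsProbabilityMeasure r] (t : ℝ) :
    levyChar b σ2 lam r t
      = Complex.I * b * t - ((σ2 / 2 : ℝ) : ℂ) * t ^ 2 + lam * (charFun r t - 1) := by
  rw [levyChar, charFun_sub_one_eq_integral]
  congr 3
  funext s
  rw [RCLike.inner_apply, conj_trivial]
  push_cast
  ring_nf

theorem continuous_levyChar (b σ2 lam : ℝ) (r : Measure ℝ) [IsProbabilityMeasure r] :
    Continuous (levyChar b σ2 lam r) := by
  simp only [funext (levyChar_eq_charFun b σ2 lam r)]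
  fun_prop

theorem norm_levyChar_le (b σ2 lam : ℝ) (r : Measure ℝ) [IsProbabilityMeasure r]
    (hr : Integrable (fun s => |s|) r) (t : ℝ) :
    ‖levyChar b σ2 lam r t‖ ≤ (|b| + |lam| * ∫ s, |s| ∂r) * |t| + |σ2| / 2 * t ^ 2 := by
  have hchar := norm_charFun_sub_one_le (μ := r) (by simpa only [Real.norm_eq_abs]) t
  simp only [Real.norm_eq_abs] at hchar
  rw [levyChar_eq_charFun]
  calc _ ≤ ‖Complex.I * b * t‖ + ‖((σ2 / 2 : ℝ) : ℂ) * t ^ 2‖ + ‖(lam : ℂ) * (charFun r t - 1)‖ :=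
        (norm_add_le _ _).trans (add_le_add_left (norm_sub_le _ _) _)
    _ ≤ _ := by
      simp only [norm_mul, Complex.norm_I, Complex.norm_real, Real.norm_eq_abs, norm_pow,
        abs_div, abs_two, one_mul, sq_abs]
      nlinarith [mul_le_mul_of_nonneg_left hchar (abs_nonneg lam)]

theorem re_levyChar_nonpos (b : ℝ) {σ2 lam : ℝ} (hσ : 0 ≤ σ2) (hlam : 0 ≤ lam)
    (r : Measure ℝ) [IsProbabilityMeasure r] (t : ℝ) :
    (levyChar b σ2 lam r t).re ≤ 0 := by
  have hre : (levyChar b σ2 lam r t).re = -(σ2 / 2 * t ^ 2) + lam * ((charFun r t).re - 1) := by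
    simp [levyChar_eq_charFun, ← Complex.ofReal_pow]
  have hchar : (charFun r t).re ≤ 1 := (Complex.re_le_norm _).trans (norm_charFun_le_one t)
  rw [hre]
  nlinarith [sq_nonneg t]

theorem SchwartzMap.integrable_comp_re {E : Type*} [NormedAddCommGroup E] [NormedSpace ℝ E]
    [MeasurableSpace E] [BorelSpace E] [SecondCountableTopology E] {μ : Measure E}
    [μ.HasTemperateGrowth] {ψ : ℝ → ℂ} (hψ : Continuous ψ) {A B : ℝ} (hA : 0 ≤ A) (hB : 0 ≤ B)
    (hψ_le : ∀ t, ‖ψ t‖ ≤ A * |t| + B * t ^ 2) (u : 𝓢(E, ℂ)) :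
    Integrable (fun x => ψ (u x).re) μ := by
  set M := SchwartzMap.seminorm ℝ 0 0 u
  have hbound : ∀ x, ‖ψ (u x).re‖ ≤ (A + B * M) * ‖u x‖ := fun x => by
    have hre : |(u x).re| ≤ ‖u x‖ := Complex.abs_re_le_norm _
    have hM : ‖u x‖ ≤ M := u.norm_le_seminorm ℝ x
    have hsq : |(u x).re| ^ 2 ≤ M * ‖u x‖ := by
      rw [sq]
      exact mul_le_mul (hre.trans hM) hre (abs_nonneg _) (norm_nonneg _ |>.trans hM)
    calc ‖ψ (u x).re‖ ≤ A * |(u x).re| + B * |(u x).re| ^ 2 := by rw [sq_abs]; exact hψ_le _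
      _ ≤ A * ‖u x‖ + B * (M * ‖u x‖) := by gcongr
      _ = (A + B * M) * ‖u x‖ := by ring
  exact (u.integrable.norm.const_mul _).mono'
    (hψ.comp (Complex.continuous_re.comp u.continuous)).aestronglyMeasurable (ae_of_all _ hbound)

theorem norm_exp_integral_le_one {X : Type*} [MeasurableSpace X] {μ : Measure X} {g : X → ℂ}
    (hg : Integrable g μ) (hre : ∀ x, (g x).re ≤ 0) :
    ‖Complex.exp (∫ x, g x ∂μ)‖ ≤ 1 := by
  rw [Complex.norm_exp, Real.exp_le_one_iff, ← RCLike.re_to_complex, ← integral_re hg]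
  exact integral_nonpos hre

theorem charFunctional_of_solution_field_well_defined_general
    (d : ℕ) (m0 α : ℝ) (hm : 0 < m0)
    (b σ2 lam : ℝ) (hσ : 0 ≤ σ2) (hlam : 0 ≤ lam)
    (r : Measure ℝ) [IsProbabilityMeasure r]
    (hmom : ∀ n : ℕ, Integrable (fun s : ℝ => |s| ^ n) r)
    (f : SchwartzMap (EuclideanSpace ℝ (Fin d)) ℂ) :
    Integrable (fun x => levyChar b σ2 lam r ((Gconv d m0 α f x).re)) ∧
    ‖Complex.exp
        (∫ x, levyChar b σ2 lam r ((Gconv d m0 α f x).re))‖ ≤ 1 := by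
  have hmom1 : Integrable (fun s : ℝ => |s|) r := by simpa using hmom 1
  have hint : Integrable (fun x => levyChar b σ2 lam r ((Gconv d m0 α f x).re)) := by
    rw [Gconv_eq_fourierMultiplierCLM d hm.ne']
    exact SchwartzMap.integrable_comp_re (continuous_levyChar b σ2 lam r)
      (by positivity) (by positivity) (norm_levyChar_le b σ2 lam r hmom1) _
  exact ⟨hint, norm_exp_integral_le_one hint fun x => re_levyChar_nonpos b hσ hlam r _⟩

theorem charFunctional_of_solution_field_well_defined
    (d : ℕ) (hd : 1 ≤ d) (m0 α : ℝ) (hm : 0 < m0) (hα : 0 < α)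
    (b σ2 lam : ℝ) (hσ : 0 ≤ σ2) (hlam : 0 ≤ lam)
    (r : Measure ℝ) [IsProbabilityMeasure r] (hr0 : r {0} = 0)
    (hmom : ∀ n : ℕ, Integrable (fun s : ℝ => |s| ^ n) r)
    (f : SchwartzMap (EuclideanSpace ℝ (Fin d)) ℂ)
    (hf : ∀ x, (f x).im = 0) :
    Integrable (fun x => levyChar b σ2 lam r ((Gconv d m0 α f x).re)) ∧
    ‖Complex.exp
        (∫ x, levyChar b σ2 lam r ((Gconv d m0 α f x).re))‖ ≤ 1 :=
  charFunctional_of_solution_field_well_defined_general d m0 α hm b σ2 lam hσ hlam r hmom f
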